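/- A primitive sequence {ε_n} in the admissible set S for [a,b] (sequences of the form ε_n = (1/n!)∫(b−x)^n dμ for some Borel probability measure μ on [a,b]) is an extreme point of the convex set S if and only if there exists x ∈ [a,b] with ε_n = (b−x)^n/n! for all n ≥ 0, i.e., μ is a Dirac point mass. -/

import Mathlib

/-!
If `μ` is not a point mass, it charges both `{x < m}` and its complement, where `m` is its mean.
Conditioning on these two sets writes the moment sequence of `μ` as a proper convex combination
of two admissible sequences, and the first one has mean `< m`, so it differs from that of `μ`.
Conversely, the continuous functional `ε ↦ 2 ε 2 - 2 (b - c) ε 1 + (b - c) ^ 2 ε 0` takes the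
value `∫ (x - c) ^ 2 ∂μ` at the moment sequence of `μ`; it is therefore nonnegative on the
admissible set and vanishes only at the sequence of `δ_c`, which is thus an exposed point.
-/

open MeasureTheory ProbabilityTheory Filter Set

lemma smul_cond_add_smul_cond_compl {Ω : Type*} [MeasurableSpace Ω] (μ : Measure Ω)
    [IsFiniteMeasure μ] {s : Set Ω} (hs : MeasurableSet s) :
    μ s • μ[|s] + μ sᶜ • μ[|sᶜ] = μ := by
  ext t
  simp only [Measure.add_apply, Measure.smul_apply, smul_eq_mul, mul_comm (μ _)]
  exact cond_add_cond_compl_eq hs μ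

lemma integral_eq_cond_add_cond_compl {Ω : Type*} [MeasurableSpace Ω] {μ : Measure Ω}
    [IsFiniteMeasure μ] {s : Set Ω} (hs : MeasurableSet s) {f : Ω → ℝ} (hf : Integrable f μ) :
    ∫ x, f x ∂μ = μ.real s * ∫ x, f x ∂μ[|s] + μ.real sᶜ * ∫ x, f x ∂μ[|sᶜ] := by
  have hμ := smul_cond_add_smul_cond_compl μ hs
  rw [← hμ] at hf
  calc ∫ x, f x ∂μ = ∫ x, f x ∂(μ s • μ[|s] + μ sᶜ • μ[|sᶜ]) := by rw [hμ]
    _ = _ := by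
      rw [integral_add_measure (hf.mono_measure (Measure.le_add_right le_rfl))
          (hf.mono_measure (Measure.le_add_left le_rfl)),
        integral_smul_measure, integral_smul_measure]
      rfl

noncomputable def momentSeq (b : ℝ) (μ : Measure ℝ) (n : ℕ) : ℝ :=
  (1 / (n.factorial : ℝ)) * ∫ x, (b - x) ^ n ∂μ

def momentSeqSet (a b : ℝ) : Set (ℕ → ℝ) :=
  momentSeq b '' {μ | IsProbabilityMeasure μ ∧ ∀ᵐ x ∂μ, x ∈ Icc a b}

noncomputable def centralSecondMoment (b c : ℝ) : StrongDual ℝ (ℕ → ℝ) :=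
  2 • ContinuousLinearMap.proj 2 - (2 * (b - c)) • ContinuousLinearMap.proj 1 +
    (b - c) ^ 2 • ContinuousLinearMap.proj 0

section

variable {μ : Measure ℝ} {a b c : ℝ}

lemma integrable_of_ae_mem_Icc [IsFiniteMeasure μ] (hμ : ∀ᵐ x ∂μ, x ∈ Icc a b) {f : ℝ → ℝ}
    (hf : Continuous f) : Integrable f μ := by
  rw [← Measure.restrict_eq_self_of_ae_mem hμ]
  exact hf.continuousOn.integrableOn_compact isCompact_Icc

lemma integral_id_lt_of_ae_lt [IsProbabilityMeasure μ] (hi : Integrable (fun x => x) μ)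
    (h : ∀ᵐ x ∂μ, x < c) : ∫ x, x ∂μ < c := by
  have hle : ∫ x, x ∂μ ≤ c := by
    simpa using integral_mono_ae hi (integrable_const c) (h.mono fun x hx => hx.le)
  refine hle.lt_of_ne fun heq => ?_
  have hae : (fun x => x) =ᵐ[μ] fun _ => c :=
    (integral_eq_iff_of_ae_le hi (integrable_const c) (h.mono fun x hx => hx.le)).1
      (by simpa using heq)
  obtain ⟨x, hx, hx'⟩ := (hae.and h).exists
  exact hx'.ne hx

lemma momentSeq_of_ae_eq_const [IsProbabilityMeasure μ] (h : ∀ᵐ x ∂μ, x = c) (n : ℕ) :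
    momentSeq b μ n = (b - c) ^ n / n.factorial := by
  have hconst : ∫ x, (b - x) ^ n ∂μ = ∫ _, (b - c) ^ n ∂μ :=
    integral_congr_ae (h.mono fun x hx => by simp only [hx])
  simp [momentSeq, hconst, div_eq_inv_mul]

lemma momentSeq_one [IsProbabilityMeasure μ] (hi : Integrable (fun x => x) μ) :
    momentSeq b μ 1 = b - ∫ x, x ∂μ := by
  simp [momentSeq, integral_sub (integrable_const b) hi]

lemma centralSecondMoment_momentSeq [IsProbabilityMeasure μ] (hμ : ∀ᵐ x ∂μ, x ∈ Icc a b) :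
    centralSecondMoment b c (momentSeq b μ) = ∫ x, (x - c) ^ 2 ∂μ := by
  have hi : ∀ n : ℕ, Integrable (fun x => (b - x) ^ n) μ := fun n =>
    integrable_of_ae_mem_Icc hμ (by fun_prop)
  calc centralSecondMoment b c (momentSeq b μ)
      = ∫ x, (b - x) ^ 2 ∂μ - 2 * (b - c) * ∫ x, (b - x) ^ 1 ∂μ + (b - c) ^ 2 := by
        simp [centralSecondMoment, momentSeq]
    _ = ∫ x, ((b - x) ^ 2 - 2 * (b - c) * (b - x) ^ 1 + (b - c) ^ 2) ∂μ := by
      rw [integral_add ?_ (integrable_const _), integral_sub (hi 2) ((hi 1).const_mul _),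
        integral_const_mul]
      · simp
      · exact (hi 2).sub ((hi 1).const_mul _)
    _ = ∫ x, (x - c) ^ 2 ∂μ := by
      congr 1; ext x; ring

lemma momentSeq_mem_openSegment_cond [IsProbabilityMeasure μ] (hμ : ∀ᵐ x ∂μ, x ∈ Icc a b)
    {s : Set ℝ} (hs : MeasurableSet s) (h₀ : μ s ≠ 0) (h₁ : μ sᶜ ≠ 0) :
    momentSeq b μ ∈ openSegment ℝ (momentSeq b μ[|s]) (momentSeq b μ[|sᶜ]) := by
  refine ⟨μ.real s, μ.real sᶜ, ENNReal.toReal_pos h₀ (measure_ne_top _ _),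
    ENNReal.toReal_pos h₁ (measure_ne_top _ _), probReal_add_probReal_compl hs, ?_⟩
  funext n
  simp only [Pi.add_apply, Pi.smul_apply, smul_eq_mul, momentSeq]
  rw [integral_eq_cond_add_cond_compl hs (integrable_of_ae_mem_Icc hμ (by fun_prop))]
  ring

lemma exists_ae_eq_const_of_momentSeq_mem_extremePoints [IsProbabilityMeasure μ]
    (hμ : ∀ᵐ x ∂μ, x ∈ Icc a b) (h : momentSeq b μ ∈ (momentSeqSet a b).extremePoints ℝ) :
    ∃ c, ∀ᵐ x ∂μ, x = c := by
  have hi : ∀ (ν : Measure ℝ) [IsFiniteMeasure ν], ν ≪ μ → Integrable (fun x => x) ν :=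
    fun _ _ hν => integrable_of_ae_mem_Icc (hν.ae_le hμ) continuous_id
  have hiμ := hi μ Measure.AbsolutelyContinuous.rfl
  set m := ∫ x, x ∂μ
  by_cases hs : μ (Iio m) = 0
  · have hle : ∀ᵐ x ∂μ, m ≤ x :=
      (measure_eq_zero_iff_ae_notMem.1 hs).mono fun x hx => not_lt.1 hx
    exact ⟨m, ((integral_eq_iff_of_ae_le (integrable_const m) hiμ hle).1
      (by simp [m])).symm⟩
  exfalso
  have hsc : μ (Iio m)ᶜ ≠ 0 := fun h0 =>
    (integral_id_lt_of_ae_lt hiμ (by simpa using measure_eq_zero_iff_ae_notMem.1 h0)).ne rfl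
  have := cond_isProbabilityMeasure hs
  have := cond_isProbabilityMeasure hsc
  obtain ⟨heq, -⟩ := (mem_extremePoints.1 h).2
    _ ⟨μ[|Iio m], ⟨inferInstance, cond_absolutelyContinuous.ae_le hμ⟩, rfl⟩
    _ ⟨μ[|(Iio m)ᶜ], ⟨inferInstance, cond_absolutelyContinuous.ae_le hμ⟩, rfl⟩
    (momentSeq_mem_openSegment_cond hμ measurableSet_Iio hs hsc)
  have hi₁ := hi μ[|Iio m] cond_absolutelyContinuous
  have hmean : ∫ x, x ∂μ[|Iio m] = m := by
    have h1 := congrFun heq 1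
    rw [momentSeq_one hi₁, momentSeq_one hiμ] at h1
    linarith
  exact (integral_id_lt_of_ae_lt hi₁ (ae_cond_mem measurableSet_Iio)).ne hmean

lemma sub_pow_div_factorial_mem_exposedPoints (hc : c ∈ Icc a b) :
    (fun n : ℕ => (b - c) ^ n / n.factorial) ∈ (momentSeqSet a b).exposedPoints ℝ := by
  have hδ : ∀ᵐ x ∂Measure.dirac c, x = c := by rw [ae_dirac_eq]; exact eventually_pure.2 rfl
  have hδI : ∀ᵐ x ∂Measure.dirac c, x ∈ Icc a b := hδ.mono fun x hx => hx ▸ hc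
  have hseq : momentSeq b (Measure.dirac c) = fun n : ℕ => (b - c) ^ n / n.factorial :=
    funext (momentSeq_of_ae_eq_const hδ)
  have hδ0 : centralSecondMoment b c (momentSeq b (Measure.dirac c)) = 0 := by
    simp [centralSecondMoment_momentSeq hδI]
  refine ⟨⟨Measure.dirac c, ⟨inferInstance, hδI⟩, hseq⟩, -centralSecondMoment b c, ?_⟩
  rintro _ ⟨ν, ⟨hν, hνI⟩, rfl⟩
  rw [← hseq, neg_apply, neg_apply, hδ0, centralSecondMoment_momentSeq hνI]
  have hnonneg : 0 ≤ ∫ x, (x - c) ^ 2 ∂ν := integral_nonneg fun x => sq_nonneg _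
  refine ⟨by linarith, fun hle => ?_⟩
  have hae := (integral_eq_zero_iff_of_nonneg (fun x => sq_nonneg (x - c))
    (integrable_of_ae_mem_Icc hνI (by fun_prop))).1 (by linarith)
  have hνc : ∀ᵐ x ∂ν, x = c := hae.mono fun x hx => by simpa [sub_eq_zero] using hx
  exact funext fun n => by rw [momentSeq_of_ae_eq_const hνc, momentSeq_of_ae_eq_const hδ]

end

theorem stmt19_general (a b : ℝ)
    (S : Set (ℕ → ℝ))
    (hS : S = {ε | ∃ μ : Measure ℝ, IsProbabilityMeasure μ ∧ μ (Set.Icc a b) = 1 ∧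
      ∀ n : ℕ, ε n = (1 / (n.factorial : ℝ)) * ∫ x, (b - x) ^ n ∂μ})
    (ε : ℕ → ℝ) (hε : ε ∈ S) :
    ε ∈ Set.extremePoints ℝ S ↔
      ∃ x ∈ Set.Icc a b, ∀ n : ℕ, ε n = (b - x) ^ n / (n.factorial : ℝ) := by
  have hS' : S = momentSeqSet a b := by
    subst hS
    ext ε
    constructor
    · rintro ⟨μ, hμ, hI, hε⟩
      exact ⟨μ, ⟨hμ, (mem_ae_iff_prob_eq_one measurableSet_Icc).2 hI⟩, (funext hε).symm⟩
    · rintro ⟨μ, ⟨hμ, hI⟩, rfl⟩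
      exact ⟨μ, hμ, (mem_ae_iff_prob_eq_one measurableSet_Icc).1 hI, fun n => rfl⟩
  subst hS'
  obtain ⟨μ, ⟨hμ, hI⟩, rfl⟩ := hε
  constructor
  · intro hext
    obtain ⟨c, hc⟩ := exists_ae_eq_const_of_momentSeq_mem_extremePoints hI hext
    obtain ⟨x, rfl, hx⟩ := (hc.and hI).exists
    exact ⟨x, hx, momentSeq_of_ae_eq_const hc⟩
  · rintro ⟨c, hc, hμc⟩
    rw [funext hμc]
    exact exposedPoints_subset_extremePoints (sub_pow_div_factorial_mem_exposedPoints hc)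

theorem stmt19 (a b : ℝ) (hab : a < b)
    (S : Set (ℕ → ℝ))
    (hS : S = {ε | ∃ μ : Measure ℝ, IsProbabilityMeasure μ ∧ μ (Set.Icc a b) = 1 ∧
      ∀ n : ℕ, ε n = (1 / (n.factorial : ℝ)) * ∫ x, (b - x) ^ n ∂μ})
    (ε : ℕ → ℝ) (hε : ε ∈ S) :
    ε ∈ Set.extremePoints ℝ S ↔
      ∃ x ∈ Set.Icc a b, ∀ n : ℕ, ε n = (b - x) ^ n / (n.factorial : ℝ) :=
  stmt19_general a b S hS ε hε
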